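/- Let alpha in F_{q^{mn}} with F_{q^{mn}} = F_q(alpha), mn > 1. If beta = (a*alpha + b)/(c*alpha + d) for some matrix [[a,b],[c,d]] in GL_2(F_q), then F_{q^{mn}} = F_q(beta) and the number of m-dimensional alpha-splitting subspaces equals the number of m-dimensional beta-splitting subspaces. -/

import Mathlib

open Pointwise

/-- `W` is a `γ`-splitting subspace: the whole space is the internal direct sum
`W ⊕ γW ⊕ ⋯ ⊕ γ^(n-1)W`. -/
def IsSplitting {F E : Type*} [Field F] [Field E] [Algebra F E]
    (n : ℕ) (α : E) (W : Submodule F E) : Prop :=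
  DirectSum.IsInternal (fun i : Fin n => α ^ (i : ℕ) • W)

/-!
Write `P_n(γ)` for the span of `1, γ, …, γ^(n-1)`, so that `W + γW + ⋯ + γ^(n-1)W = P_n(γ) * W`.
For `γ ≠ 0` and `dim W = m` the `n` summands have total dimension `mn = dim E`, hence `W` is
`γ`-splitting iff `P_n(γ) * W = ⊤`. Now `P_n` is invariant under affine substitutions
`γ ↦ uγ + v` (`u ≠ 0`), and `γ^(n-1) P_n(γ⁻¹) = P_n(γ)` by reversing the order of the powers.
Every Möbius transformation is a composite of these, so `P_n(β)` is a nonzero multiple of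
`P_n(α)`, and the two splitting conditions agree for every `W`. Finally `α` is in turn a Möbius
transform of `β`, so `β` generates `E` as well.
-/

open Module DirectSum
open scoped IntermediateField

theorem DirectSum.isInternal_of_iSup_eq_top_of_sum_finrank_eq {K V ι : Type*} [DivisionRing K]
    [AddCommGroup V] [Module K V] [FiniteDimensional K V] [Fintype ι] [DecidableEq ι]
    {p : ι → Submodule K V} (htop : iSup p = ⊤) (hdim : ∑ i, finrank K (p i) = finrank K V) :
    IsInternal p := by
  have hsurj : Function.Surjective (coeLinearMap p) := by
    rw [← LinearMap.range_eq_top, range_coeLinearMap, htop]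
  have hfin : finrank K (⨁ i, p i) = finrank K V := by rw [finrank_directSum, hdim]
  exact ⟨(LinearMap.injective_iff_surjective_of_finrank_eq_finrank hfin).mpr hsurj, hsurj⟩

section

variable {F E : Type*} [Field F] [Field E] [Algebra F E]

namespace Submodule

theorem finrank_smul_of_ne_zero {γ : E} (hγ : γ ≠ 0) (W : Submodule F E) :
    finrank F ↥(γ • W) = finrank F W :=
  (DistribMulAction.toLinearEquiv F E (Units.mk0 γ hγ)).finrank_map_eq W

theorem smul_eq_top_iff {γ : E} (hγ : γ ≠ 0) {W : Submodule F E} : γ • W = ⊤ ↔ W = ⊤ := by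
  simp only [eq_top_iff', mem_smul_iff_inv_mul_mem hγ]
  exact ⟨fun h x => by simpa [hγ] using h (γ * x), fun h x => h _⟩

theorem pointwise_smul_mul_assoc (γ : E) (S W : Submodule F E) : (γ • S) * W = γ • (S * W) := by
  rw [← span_singleton_mul, ← span_singleton_mul, mul_assoc]

end Submodule

variable (F) in
def powSpan (n : ℕ) (γ : E) : Submodule F E :=
  Submodule.span F (Set.range fun i : Fin n => γ ^ (i : ℕ))

theorem iSup_pow_smul_eq_powSpan_mul (n : ℕ) (γ : E) (W : Submodule F E) :
    ⨆ i : Fin n, γ ^ (i : ℕ) • W = powSpan F n γ * W := by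
  simp only [powSpan, Submodule.span_range_eq_iSup, Submodule.iSup_mul,
    Submodule.span_singleton_mul]

open Polynomial in
theorem aeval_mem_powSpan {n : ℕ} (γ : E) {p : F[X]} (hp : p.natDegree < n) :
    aeval γ p ∈ powSpan F n γ := by
  rw [aeval_eq_sum_range]
  refine Submodule.sum_mem _ fun i hi => Submodule.smul_mem _ _ (Submodule.subset_span ?_)
  exact ⟨⟨i, by grind⟩, rfl⟩

open Polynomial in
theorem powSpan_affine_le (n : ℕ) (γ : E) (u v : F) :
    powSpan F n (algebraMap F E u * γ + algebraMap F E v) ≤ powSpan F n γ := by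
  refine Submodule.span_le.mpr (Set.range_subset_iff.mpr fun i => ?_)
  have hpow : (algebraMap F E u * γ + algebraMap F E v) ^ (i : ℕ) =
      aeval γ ((C u * X + C v) ^ (i : ℕ)) := by
    simp
  rw [hpow]
  refine aeval_mem_powSpan γ (natDegree_pow_le.trans_lt ?_)
  calc (i : ℕ) * (C u * X + C v).natDegree ≤ i * 1 := Nat.mul_le_mul_left _ natDegree_linear_le
    _ < n := by simp

theorem powSpan_affine (n : ℕ) (γ : E) {u : F} (hu : u ≠ 0) (v : F) :
    powSpan F n (algebraMap F E u * γ + algebraMap F E v) = powSpan F n γ := by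
  refine le_antisymm (powSpan_affine_le n γ u v) ?_
  have hγ : γ = algebraMap F E u⁻¹ * (algebraMap F E u * γ + algebraMap F E v) +
      algebraMap F E (-(v / u)) := by
    have : algebraMap F E u ≠ 0 := (map_ne_zero _).mpr hu
    simp only [map_inv₀, map_neg, map_div₀]
    field_simp
    ring
  conv_lhs => rw [hγ]
  exact powSpan_affine_le n _ _ _

theorem pow_smul_powSpan_inv (n : ℕ) {γ : E} (hγ : γ ≠ 0) :
    γ ^ (n - 1) • powSpan F n γ⁻¹ = powSpan F n γ := by
  have hrev : (fun i : Fin n => γ ^ (n - 1) • γ⁻¹ ^ (i : ℕ)) =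
      (fun i : Fin n => γ ^ (i : ℕ)) ∘ Fin.rev := by
    funext i
    simp only [smul_eq_mul, Function.comp_apply, Fin.val_rev, inv_pow]
    rw [← pow_sub₀ _ hγ (by omega)]
    congr 1
    omega
  rw [powSpan, Submodule.smul_span, ← Set.range_smul, hrev, Fin.rev_surjective.range_comp, powSpan]

def moebius (a b c d : F) (x : E) : E :=
  (algebraMap F E a * x + algebraMap F E b) / (algebraMap F E c * x + algebraMap F E d)

theorem algebraMap_mul_add_algebraMap_ne_zero {α : E} (hα : α ∉ Set.range (algebraMap F E))
    {c d : F} (hcd : c ≠ 0 ∨ d ≠ 0) : algebraMap F E c * α + algebraMap F E d ≠ 0 := by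
  intro h
  by_cases hc : c = 0
  · subst hc
    simp_all
  · refine hα ⟨-d / c, ?_⟩
    have : algebraMap F E c ≠ 0 := (map_ne_zero _).mpr hc
    rw [map_div₀, map_neg]
    field_simp
    linear_combination -h

theorem moebius_moebius {α : E} (hα : α ∉ Set.range (algebraMap F E)) {a b c d : F}
    (hdet : a * d - b * c ≠ 0) : moebius (-d) b c (-a) (moebius a b c d α) = α := by
  have hden : algebraMap F E c * α + algebraMap F E d ≠ 0 :=
    algebraMap_mul_add_algebraMap_ne_zero hα (by by_contra! h; simp_all)
  have hβ : moebius a b c d α * (algebraMap F E c * α + algebraMap F E d) =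
      algebraMap F E a * α + algebraMap F E b := div_mul_cancel₀ _ hden
  have hpole : (algebraMap F E c * moebius a b c d α + algebraMap F E (-a)) *
      (algebraMap F E c * α + algebraMap F E d) = algebraMap F E (b * c - a * d) := by
    simp only [map_neg, map_sub, map_mul]
    linear_combination algebraMap F E c * hβ
  have hpole_ne : algebraMap F E c * moebius a b c d α + algebraMap F E (-a) ≠ 0 :=
    left_ne_zero_of_mul
      (hpole ▸ (map_ne_zero _).mpr (by contrapose! hdet; linear_combination -hdet))
  rw [moebius, div_eq_iff hpole_ne, map_neg, map_neg]
  linear_combination -hβ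

theorem exists_smul_powSpan_moebius (n : ℕ) {α : E} (hα : α ∉ Set.range (algebraMap F E))
    {a b c d : F} (hdet : a * d - b * c ≠ 0) :
    ∃ ε : E, ε ≠ 0 ∧ ε • powSpan F n (moebius a b c d α) = powSpan F n α := by
  by_cases hc : c = 0
  · have hd : d ≠ 0 := by rintro rfl; simp_all
    have ha : a ≠ 0 := by rintro rfl; simp_all
    have haffine : moebius a b c d α = algebraMap F E (a / d) * α + algebraMap F E (b / d) := by
      have := (map_ne_zero (algebraMap F E)).mpr hd
      simp only [moebius, hc, map_zero, zero_mul, zero_add, map_div₀]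
      field_simp
    exact ⟨1, one_ne_zero, by rw [one_smul, haffine, powSpan_affine n α (div_ne_zero ha hd)]⟩
  · set γ := algebraMap F E c * α + algebraMap F E d
    have hγ : γ ≠ 0 := algebraMap_mul_add_algebraMap_ne_zero hα (Or.inl hc)
    have hinv : moebius a b c d α =
        algebraMap F E ((b * c - a * d) / c) * γ⁻¹ + algebraMap F E (a / c) := by
      have := (map_ne_zero (algebraMap F E)).mpr hc
      rw [moebius, div_eq_iff hγ, add_mul, mul_assoc, inv_mul_cancel₀ hγ, mul_one]
      simp only [γ, map_div₀, map_sub, map_mul]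
      field_simp
      ring
    have hu : (b * c - a * d) / c ≠ 0 :=
      div_ne_zero (by contrapose! hdet; linear_combination -hdet) hc
    refine ⟨γ ^ (n - 1), pow_ne_zero _ hγ, ?_⟩
    rw [hinv, powSpan_affine n γ⁻¹ hu, pow_smul_powSpan_inv n hγ, powSpan_affine n α hc]

theorem moebius_mem_adjoin_simple (a b c d : F) (x : E) : moebius a b c d x ∈ F⟮x⟯ := by
  have hx := IntermediateField.mem_adjoin_simple_self F x
  exact div_mem (add_mem (mul_mem (algebraMap_mem _ a) hx) (algebraMap_mem _ b))
    (add_mem (mul_mem (algebraMap_mem _ c) hx) (algebraMap_mem _ d))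

theorem Algebra.adjoin_singleton_eq_top_of_mem_adjoin_simple [Algebra.IsAlgebraic F E]
    {α β : E} (hα : Algebra.adjoin F {α} = ⊤) (hαβ : α ∈ F⟮β⟯) : Algebra.adjoin F {β} = ⊤ := by
  rw [← IntermediateField.adjoin_simple_toSubalgebra_of_isAlgebraic
    (Algebra.IsAlgebraic.isAlgebraic β)]
  exact eq_top_mono (Algebra.adjoin_le (Set.singleton_subset_iff.mpr hαβ)) hα

theorem notMem_range_algebraMap_of_adjoin_eq_top {α : E} (hα : Algebra.adjoin F {α} = ⊤)
    (hE : finrank F E ≠ 1) : α ∉ Set.range (algebraMap F E) := by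
  rintro ⟨x, rfl⟩
  refine hE (Subalgebra.bot_eq_top_iff_finrank_eq_one.mp ?_)
  rw [← hα, eq_comm, ← le_bot_iff]
  exact Algebra.adjoin_le (Set.singleton_subset_iff.mpr (Subalgebra.algebraMap_mem _ x))

theorem isSplitting_iff_powSpan_mul_eq_top [FiniteDimensional F E] {m n : ℕ}
    (hdim : finrank F E = m * n) {γ : E} (hγ : γ ≠ 0) {W : Submodule F E}
    (hW : finrank F W = m) : IsSplitting n γ W ↔ powSpan F n γ * W = ⊤ := by
  rw [← iSup_pow_smul_eq_powSpan_mul]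
  refine ⟨IsInternal.submodule_iSup_eq_top,
    fun h => isInternal_of_iSup_eq_top_of_sum_finrank_eq h ?_⟩
  simp [Submodule.finrank_smul_of_ne_zero (pow_ne_zero _ hγ), hW, hdim, mul_comm]

end

theorem stmt17_general (F E : Type*) [Field F] [Field E] [Algebra F E]
    (m n : ℕ) (hmn : 1 < m * n)
    (hdim : Module.finrank F E = m * n)
    (α : E) (hα : Algebra.adjoin F {α} = ⊤)
    (a b c d : F) (habcd : a * d - b * c ≠ 0) (β : E)
    (hβ : β = (algebraMap F E a * α + algebraMap F E b) /
              (algebraMap F E c * α + algebraMap F E d)) :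
    Algebra.adjoin F {β} = ⊤ ∧
    Nat.card {W : Submodule F E // Module.finrank F W = m ∧ IsSplitting n α W} =
      Nat.card {W : Submodule F E // Module.finrank F W = m ∧ IsSplitting n β W} := by
  have : FiniteDimensional F E := Module.finite_of_finrank_pos (by omega)
  have hE : finrank F E ≠ 1 := by omega
  have hαF := notMem_range_algebraMap_of_adjoin_eq_top hα hE
  have hβ : β = moebius a b c d α := hβ
  have hβtop : Algebra.adjoin F {β} = ⊤ := by
    refine Algebra.adjoin_singleton_eq_top_of_mem_adjoin_simple hα ?_
    rw [← moebius_moebius hαF habcd, ← hβ]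
    exact moebius_mem_adjoin_simple _ _ _ _ β
  have hβF := notMem_range_algebraMap_of_adjoin_eq_top hβtop hE
  obtain ⟨ε, hε, hspan⟩ := exists_smul_powSpan_moebius n hαF habcd
  refine ⟨hβtop, Nat.card_congr (Equiv.subtypeEquivRight fun W => and_congr_right fun hW => ?_)⟩
  rw [isSplitting_iff_powSpan_mul_eq_top hdim (fun h => hαF ⟨0, by simp [h]⟩) hW,
    isSplitting_iff_powSpan_mul_eq_top hdim (fun h => hβF ⟨0, by simp [h]⟩) hW, ← hspan,
    Submodule.pointwise_smul_mul_assoc, Submodule.smul_eq_top_iff hε, hβ]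

theorem stmt17 (F E : Type*) [Field F] [Fintype F] [Field E] [Algebra F E]
    (m n : ℕ) (hm : 0 < m) (hn : 0 < n) (hmn : 1 < m * n)
    (hdim : Module.finrank F E = m * n)
    (α : E) (hα : Algebra.adjoin F {α} = ⊤)
    (a b c d : F) (habcd : a * d - b * c ≠ 0) (β : E)
    (hβ : β = (algebraMap F E a * α + algebraMap F E b) /
              (algebraMap F E c * α + algebraMap F E d)) :
    Algebra.adjoin F {β} = ⊤ ∧
    Nat.card {W : Submodule F E // Module.finrank F W = m ∧ IsSplitting n α W} =
      Nat.card {W : Submodule F E // Module.finrank F W = m ∧ IsSplitting n β W} :=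
  stmt17_general F E m n hmn hdim α hα a b c d habcd β hβ
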